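/- arXiv:2604.24183 — 2 statements merged into one kernel-verified Lean document; each statement's English description precedes it below -/
import Mathlib

section
/- Let G be a bipartite graph with bipartition (X, Y) without isolated vertices, let D ⊆ X be a minimal Y-dominating set, and let M be a matching in G[D ∪ P] covering D, where P is the union of private neighbor sets. Define a partial 2-coloring φ by giving every edge of M color 1, and for each y ∈ Y not covered by M, choosing one vertex x ∈ N(y) ∩ D and giving edge xy color 2. Then every edge of G is satisfied by φ. -/
/-!
Let `uv` be an edge with `u ∈ X`, `v ∈ Y`. If `v` is matched, it is a private neighbour of
some `x ∈ D`, so its partner and `u` (if matched, `u ∈ D`) both equal `x`: the only colour-1 edge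
around `uv` is the matching edge at `v`. If only `u` is matched, its matching edge is the only
colour-1 edge around `uv`. If neither is matched, the colour-2 edges are the edges `g(y) y` with `y`
unmatched; none of them meets `u` because `g(y) ∈ D` is matched, and the only one at `v` is
`g(v) v`.
-/

open SimpleGraph

variable {V : Type*}

/-- The closed edge-neighborhood of an edge `uv`: all edges incident to `u` or `v`. -/
def edgeNbhd (G : SimpleGraph V) (u v : V) : Set (Sym2 V) :=
  G.incidenceSet u ∪ G.incidenceSet v

/-- An edge `uv` is satisfied by a partial edge coloring `φ` if some color appears
exactly once among the colored edges incident to `u` or `v`. -/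
def Satisfied (G : SimpleGraph V) (φ : Sym2 V → Option ℕ) (u v : V) : Prop :=
  ∃ c : ℕ, {e | e ∈ edgeNbhd G u v ∧ φ e = some c}.ncard = 1

/-- A partial edge coloring of `G` with `k` colors such that every edge of `G` is satisfied. -/
def IsPartialSCF (G : SimpleGraph V) (k : ℕ) (φ : Sym2 V → Option ℕ) : Prop :=
  (∀ e c, φ e = some c → e ∈ G.edgeSet ∧ c < k) ∧
  ∀ ⦃u v⦄, G.Adj u v → Satisfied G φ u v

/-- `χ'_sCF(G)`. -/
noncomputable def sCFIndex (G : SimpleGraph V) : ℕ :=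
  sInf {k | ∃ φ, IsPartialSCF G k φ}

/-- A (total) conflict-free edge coloring of `G` with `k` colors. -/
def IsCF (G : SimpleGraph V) (k : ℕ) (φ : Sym2 V → ℕ) : Prop :=
  (∀ e ∈ G.edgeSet, φ e < k) ∧
  ∀ ⦃u v⦄, G.Adj u v → ∃ c : ℕ, {e | e ∈ edgeNbhd G u v ∧ φ e = c}.ncard = 1

/-- `χ'_CF(G)`, the conflict-free chromatic index. -/
noncomputable def cfIndex (G : SimpleGraph V) : ℕ :=
  sInf {k | ∃ φ, IsCF G k φ}

/-- The neighborhood of a set of vertices. -/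
def NbhdSet (G : SimpleGraph V) (S : Set V) : Set V :=
  ⋃ x ∈ S, G.neighborSet x

/-- The set of private neighbors of `x` with respect to `D`. -/
def privNbrs (G : SimpleGraph V) (D : Set V) (x : V) : Set V :=
  {y ∈ G.neighborSet x | G.neighborSet y ∩ D = {x}}

/-- The number of edges of `F` incident to `v`. -/
noncomputable def edegOn (F : Set (Sym2 V)) (v : V) : ℕ :=
  {e ∈ F | v ∈ e}.ncard

lemma SimpleGraph.Subgraph.IsMatching.eq_of_mem_edgeSet {G : SimpleGraph V} {M : G.Subgraph}
    (hM : M.IsMatching) {p q : V} (hpq : M.Adj p q) {e : Sym2 V} (he : e ∈ M.edgeSet)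
    (hp : p ∈ e) : e = s(p, q) := by
  induction e with
  | h a b =>
    rcases Sym2.mem_iff.1 hp with rfl | rfl
    · rw [hM.eq_of_adj_left hpq he]
    · rw [Sym2.eq_swap, hM.eq_of_adj_left hpq (M.mem_edgeSet.1 he).symm]

lemma satisfied_comm {G : SimpleGraph V} {φ : Sym2 V → Option ℕ} {u v : V} :
    Satisfied G φ u v ↔ Satisfied G φ v u := by
  rw [Satisfied, Satisfied, edgeNbhd, edgeNbhd, Set.union_comm]

lemma satisfied_of_forall_eq {G : SimpleGraph V} {φ : Sym2 V → Option ℕ} {u v : V} {c : ℕ}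
    {e₀ : Sym2 V} (he₀ : e₀ ∈ edgeNbhd G u v) (hc₀ : φ e₀ = some c)
    (huniq : ∀ e ∈ edgeNbhd G u v, φ e = some c → e = e₀) : Satisfied G φ u v :=
  ⟨c, Set.ncard_eq_one.2 ⟨e₀, Set.eq_singleton_iff_unique_mem.2
    ⟨⟨he₀, hc₀⟩, fun e ⟨he, hc⟩ => huniq e he hc⟩⟩⟩

lemma satisfied_of_isMatching {G : SimpleGraph V} {M : G.Subgraph} (hM : M.IsMatching)
    {φ : Sym2 V → Option ℕ} {c : ℕ} (hφ : ∀ e, φ e = some c ↔ e ∈ M.edgeSet) {u v w : V}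
    (hvw : M.Adj v w) (hu : ∀ e ∈ M.edgeSet, u ∈ e → e = s(v, w)) : Satisfied G φ u v := by
  refine satisfied_of_forall_eq (Or.inr ((G.mem_incidenceSet v w).2 (M.adj_sub hvw)))
    ((hφ _).2 hvw) fun e he hc => ?_
  rw [hφ] at hc
  rcases he with he | he
  · exact hu e hc he.2
  · exact hM.eq_of_mem_edgeSet hvw hc he.2

lemma eq_of_mem_privNbrs {G : SimpleGraph V} {D : Set V} {x y a : V} (hy : y ∈ privNbrs G D x)
    (ha : a ∈ D) (hay : G.Adj a y) : a = x := by
  have : a ∈ G.neighborSet y ∩ D := ⟨hay.symm, ha⟩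
  rwa [hy.2, Set.mem_singleton_iff] at this

section Bipartite

variable {G : SimpleGraph V} {X Y : Set V}

lemma mem_right_of_adj (hdisj : Disjoint X Y)
    (hbip : ∀ ⦃u v⦄, G.Adj u v → (u ∈ X ∧ v ∈ Y) ∨ (u ∈ Y ∧ v ∈ X)) {x y : V} (hx : x ∈ X)
    (hxy : G.Adj x y) : y ∈ Y :=
  (hbip hxy).elim And.right fun h => absurd h.1 (Set.disjoint_left.1 hdisj hx)

lemma mem_left_of_adj (hdisj : Disjoint X Y)
    (hbip : ∀ ⦃u v⦄, G.Adj u v → (u ∈ X ∧ v ∈ Y) ∨ (u ∈ Y ∧ v ∈ X)) {x y : V} (hy : y ∈ Y)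
    (hxy : G.Adj x y) : x ∈ X :=
  (hbip hxy).elim And.left fun h => absurd h.2 (Set.disjoint_right.1 hdisj hy)

lemma mem_of_mem_verts_of_mem_left (hdisj : Disjoint X Y)
    (hbip : ∀ ⦃u v⦄, G.Adj u v → (u ∈ X ∧ v ∈ Y) ∨ (u ∈ Y ∧ v ∈ X)) {D : Set V} (hDX : D ⊆ X)
    {M : G.Subgraph} (hMverts : M.verts ⊆ D ∪ (⋃ x ∈ D, privNbrs G D x)) {z : V}
    (hz : z ∈ M.verts) (hzX : z ∈ X) : z ∈ D := by
  refine (hMverts hz).resolve_right fun hP => ?_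
  obtain ⟨x, hx, hzx⟩ := Set.mem_iUnion₂.1 hP
  exact Set.disjoint_left.1 hdisj hzX (mem_right_of_adj hdisj hbip (hDX hx) hzx.1)

lemma satisfied_of_mem_verts_right (hdisj : Disjoint X Y)
    (hbip : ∀ ⦃u v⦄, G.Adj u v → (u ∈ X ∧ v ∈ Y) ∨ (u ∈ Y ∧ v ∈ X)) {D : Set V} (hDX : D ⊆ X)
    {M : G.Subgraph} (hM : M.IsMatching) (hMverts : M.verts ⊆ D ∪ (⋃ x ∈ D, privNbrs G D x))
    {φ : Sym2 V → Option ℕ} (hφ1 : ∀ e : Sym2 V, φ e = some 1 ↔ e ∈ M.edgeSet) {u v : V}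
    (huX : u ∈ X) (hvY : v ∈ Y) (huv : G.Adj u v) (hvM : v ∈ M.verts) : Satisfied G φ u v := by
  obtain ⟨w, hvw, -⟩ := hM hvM
  have hvP : v ∈ ⋃ x ∈ D, privNbrs G D x :=
    (hMverts hvM).resolve_left fun hvD => Set.disjoint_left.1 hdisj (hDX hvD) hvY
  obtain ⟨x, -, hvx⟩ := Set.mem_iUnion₂.1 hvP
  have hwD : w ∈ D := mem_of_mem_verts_of_mem_left hdisj hbip hDX hMverts hvw.snd_mem
    (mem_left_of_adj hdisj hbip hvY (M.adj_sub hvw).symm)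
  refine satisfied_of_isMatching hM hφ1 hvw fun e he hue => ?_
  have huD : u ∈ D := mem_of_mem_verts_of_mem_left hdisj hbip hDX hMverts
    (M.mem_verts_of_mem_edge he hue) huX
  obtain rfl : u = w := (eq_of_mem_privNbrs hvx huD huv).trans
    (eq_of_mem_privNbrs hvx hwD (M.adj_sub hvw).symm).symm
  rw [hM.eq_of_mem_edgeSet hvw.symm he hue, Sym2.eq_swap]

lemma satisfied_of_not_mem_verts (hdisj : Disjoint X Y) {D : Set V} (hDX : D ⊆ X)
    {M : G.Subgraph} (hMcov : D ⊆ M.verts) {g : V → V}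
    (hg : ∀ y ∈ Y \ M.verts, g y ∈ D ∧ G.Adj (g y) y) {φ : Sym2 V → Option ℕ}
    (hφ2 : ∀ e : Sym2 V, φ e = some 2 ↔ ∃ y ∈ Y \ M.verts, e = s(g y, y)) {u v : V}
    (huX : u ∈ X) (hvY : v ∈ Y) (huM : u ∉ M.verts) (hvM : v ∉ M.verts) :
    Satisfied G φ u v := by
  have hgv : G.Adj v (g v) := (hg v ⟨hvY, hvM⟩).2.symm
  refine satisfied_of_forall_eq (e₀ := s(g v, v))
    (Or.inr (by rw [Sym2.eq_swap]; exact (G.mem_incidenceSet v (g v)).2 hgv))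
    ((hφ2 _).2 ⟨v, ⟨hvY, hvM⟩, rfl⟩) fun e he hc => ?_
  obtain ⟨y, hy, rfl⟩ := (hφ2 e).1 hc
  have hgyX : g y ∈ X := hDX (hg y hy).1
  rcases he with ⟨-, hue⟩ | ⟨-, hve⟩
  · rcases Sym2.mem_iff.1 hue with rfl | rfl
    · exact absurd (hMcov (hg y hy).1) huM
    · exact absurd hy.1 (Set.disjoint_left.1 hdisj huX)
  · rcases Sym2.mem_iff.1 hve with rfl | rfl
    · exact absurd hvY (Set.disjoint_left.1 hdisj hgyX)
    · rfl

end Bipartite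

theorem stmt_6_general (G : SimpleGraph V) (X Y : Set V)
    (hdisj : Disjoint X Y)
    (hbip : ∀ ⦃u v⦄, G.Adj u v → (u ∈ X ∧ v ∈ Y) ∨ (u ∈ Y ∧ v ∈ X))
    (D : Set V) (hDX : D ⊆ X)
    (M : G.Subgraph) (hM : M.IsMatching)
    (hMverts : M.verts ⊆ D ∪ (⋃ x ∈ D, privNbrs G D x)) (hMcov : D ⊆ M.verts)
    (g : V → V) (hg : ∀ y ∈ Y \ M.verts, g y ∈ D ∧ G.Adj (g y) y)
    (φ : Sym2 V → Option ℕ)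
    (hφ1 : ∀ e : Sym2 V, φ e = some 1 ↔ e ∈ M.edgeSet)
    (hφ2 : ∀ e : Sym2 V, φ e = some 2 ↔ ∃ y ∈ Y \ M.verts, e = s(g y, y)) :
    ∀ ⦃u v⦄, G.Adj u v → Satisfied G φ u v := by
  intro u v huv
  wlog huX : u ∈ X generalizing u v
  · exact satisfied_comm.1 (this huv.symm ((hbip huv).resolve_left fun h => huX h.1).2)
  have hvY : v ∈ Y := mem_right_of_adj hdisj hbip huX huv
  by_cases hvM : v ∈ M.verts
  · exact satisfied_of_mem_verts_right hdisj hbip hDX hM hMverts hφ1 huX hvY huv hvM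
  by_cases huM : u ∈ M.verts
  · obtain ⟨w, huw, -⟩ := hM huM
    exact satisfied_comm.2 <| satisfied_of_isMatching hM hφ1 huw fun e he hve =>
      absurd (M.mem_verts_of_mem_edge he hve) hvM
  · exact satisfied_of_not_mem_verts hdisj hDX hMcov hg hφ2 huX hvY huM hvM

theorem stmt_6 [Fintype V] (G : SimpleGraph V) (X Y : Set V)
    (hdisj : Disjoint X Y) (hcover : X ∪ Y = Set.univ)
    (hbip : ∀ ⦃u v⦄, G.Adj u v → (u ∈ X ∧ v ∈ Y) ∨ (u ∈ Y ∧ v ∈ X))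
    (hiso : ∀ v : V, ∃ u, G.Adj v u)
    (D : Set V) (hDX : D ⊆ X) (hdom : NbhdSet G D = Y)
    (hmin : ∀ x ∈ D, NbhdSet G (D \ {x}) ≠ Y)
    (M : G.Subgraph) (hM : M.IsMatching)
    (hMverts : M.verts ⊆ D ∪ (⋃ x ∈ D, privNbrs G D x)) (hMcov : D ⊆ M.verts)
    (g : V → V) (hg : ∀ y ∈ Y \ M.verts, g y ∈ D ∧ G.Adj (g y) y)
    (φ : Sym2 V → Option ℕ)
    (hφ1 : ∀ e : Sym2 V, φ e = some 1 ↔ e ∈ M.edgeSet)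
    (hφ2 : ∀ e : Sym2 V, φ e = some 2 ↔ ∃ y ∈ Y \ M.verts, e = s(g y, y))
    (hφother : ∀ e c, φ e = some c → c = 1 ∨ c = 2) :
    ∀ ⦃u v⦄, G.Adj u v → Satisfied G φ u v :=
  stmt_6_general G X Y hdisj hbip D hDX M hM hMverts hMcov g hg φ hφ1 hφ2
end

section
/- For n ≥ m ≥ 3, the conflict-free chromatic index of the complete bipartite graph K_{n,m} equals 3. -/
/-!
For the upper bound, color the edge `a₀b₀` with `2`, the other edges at `b₀` with `1` and all
remaining edges with `0`: an edge through `a₀` or `b₀` sees exactly one edge of color `2`, any other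
edge `ab` sees exactly one edge of color `1`, namely `ab₀`.

For the lower bound, take a conflict-free coloring with colors `0, 1`. The color occurring
exactly once around an edge `uv` is *rare* at `u` and at `v`, i.e. it has at most one edge there.
A vertex of degree at least three has at most one rare color, so rare colors propagate along
edges, and by connectivity a single color class `F` meets every closed edge-neighbourhood exactly
once. In `K_{n,m}` with `n, m ≥ 2` no such `F` exists: once `a₁b₁ ∈ F`, no vertex other than
`a₁, b₁` is covered by `F`, so an edge avoiding `a₁` and `b₁` sees no edge of `F`.
-/

open SimpleGraph

variable {V : Type*}

open Sum

namespace SimpleGraph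

lemma ncard_incidenceSet (G : SimpleGraph V) (x : V) :
    (G.incidenceSet x).ncard = (G.neighborSet x).ncard := by
  classical
  rw [← Nat.card_coe_set_eq, ← Nat.card_coe_set_eq,
    Nat.card_congr (G.incidenceSetEquivNeighborSet x)]

section CompleteBipartite

variable {α β : Type*}

lemma completeBipartiteGraph_preconnected [Nonempty α] [Nonempty β] :
    (completeBipartiteGraph α β).Preconnected := by
  obtain ⟨a₀⟩ := ‹Nonempty α›
  obtain ⟨b₀⟩ := ‹Nonempty β›
  have h : ∀ x, (completeBipartiteGraph α β).Reachable (inr b₀) x := by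
    rintro (a | b)
    · exact Adj.reachable (by simp)
    · exact (Adj.reachable (by simp) : Reachable _ (inr b₀) (inl a₀)).trans
        (Adj.reachable (by simp))
  exact fun x y => (h x).symm.trans (h y)

lemma ncard_neighborSet_inl (a : α) :
    ((completeBipartiteGraph α β).neighborSet (inl a)).ncard = Nat.card β := by
  rw [← Set.ncard_range_of_injective inr_injective]
  congr 1
  ext (_ | _) <;> simp

lemma ncard_neighborSet_inr (b : β) :
    ((completeBipartiteGraph α β).neighborSet (inr b)).ncard = Nat.card α := by
  rw [← Set.ncard_range_of_injective inl_injective]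
  congr 1
  ext (_ | _) <;> simp

lemma exists_eq_of_mem_edgeSet_completeBipartiteGraph {e : Sym2 (α ⊕ β)}
    (he : e ∈ (completeBipartiteGraph α β).edgeSet) : ∃ a b, e = s(inl a, inr b) := by
  rw [edgeSet_completeBipartiteGraph] at he
  obtain ⟨⟨a, b⟩, rfl⟩ := he
  exact ⟨a, b, rfl⟩

end CompleteBipartite

end SimpleGraph

variable {G : SimpleGraph V} {φ : Sym2 V → ℕ} {u v x : V} {c : ℕ}

lemma edgeNbhd_comm (G : SimpleGraph V) (u v : V) : edgeNbhd G u v = edgeNbhd G v u :=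
  Set.union_comm _ _

lemma mem_edgeNbhd {e : Sym2 V} : e ∈ edgeNbhd G u v ↔ e ∈ G.edgeSet ∧ (u ∈ e ∨ v ∈ e) := by
  simp [edgeNbhd, incidenceSet, and_or_left]

lemma IsCF.mono {k l : ℕ} (hφ : IsCF G k φ) (hkl : k ≤ l) : IsCF G l φ :=
  ⟨fun e he => (hφ.1 e he).trans_le hkl, hφ.2⟩

lemma IsCF.lt_of_ncard_eq_one {k : ℕ} (hφ : IsCF G k φ)
    (h : (edgeNbhd G u v ∩ φ ⁻¹' {c}).ncard = 1) : c < k := by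
  obtain ⟨e, he, rfl⟩ :=
    Set.nonempty_of_ncard_ne_zero (s := edgeNbhd G u v ∩ φ ⁻¹' {c}) (by omega)
  exact hφ.1 e (mem_edgeNbhd.1 he).1

def IsEfficientEdgeDominating (G : SimpleGraph V) (F : Set (Sym2 V)) : Prop :=
  ∀ ⦃u v⦄, G.Adj u v → (edgeNbhd G u v ∩ F).ncard = 1

def IsRareColor (G : SimpleGraph V) (φ : Sym2 V → ℕ) (x : V) (c : ℕ) : Prop :=
  (G.incidenceSet x ∩ φ ⁻¹' {c}).ncard ≤ 1

lemma isRareColor_left_of_ncard_eq_one (h : (edgeNbhd G u v ∩ φ ⁻¹' {c}).ncard = 1) :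
    IsRareColor G φ u c :=
  (Set.ncard_le_ncard (Set.inter_subset_inter_left _ (Set.subset_union_left (t := _)))
    (Set.finite_of_ncard_pos (h ▸ one_pos))).trans h.le

lemma isRareColor_right_of_ncard_eq_one (h : (edgeNbhd G u v ∩ φ ⁻¹' {c}).ncard = 1) :
    IsRareColor G φ v c :=
  isRareColor_left_of_ncard_eq_one (edgeNbhd_comm G u v ▸ h)

lemma IsRareColor.eq (hφ : ∀ e ∈ G.edgeSet, φ e < 2) (hx : 3 ≤ (G.neighborSet x).ncard)
    {c c' : ℕ} (hc : c < 2) (hc' : c' < 2) (h : IsRareColor G φ x c)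
    (h' : IsRareColor G φ x c') : c = c' := by
  by_contra hne
  unfold IsRareColor at h h'
  set I := G.incidenceSet x
  have hcover : I ⊆ (I ∩ φ ⁻¹' {c}) ∪ (I ∩ φ ⁻¹' {c'}) := by
    intro e he
    have := hφ e (G.incidenceSet_subset x he)
    by_cases hec : φ e = c
    · exact Or.inl ⟨he, hec⟩
    · exact Or.inr ⟨he, by simp only [Set.mem_preimage, Set.mem_singleton_iff]; omega⟩
  have hfin : I.Finite := Set.finite_of_ncard_pos (by rw [ncard_incidenceSet]; omega)
  have hle := calc (G.neighborSet x).ncard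
      _ = I.ncard := (ncard_incidenceSet G x).symm
      _ ≤ _ := Set.ncard_le_ncard hcover
        (hfin.subset (Set.union_subset Set.inter_subset_left Set.inter_subset_left))
      _ ≤ _ := Set.ncard_union_le _ _
  omega

section TwoColorings

-- `ncard` vanishes on infinite sets, so `hdeg` also makes `G` locally finite.
variable (hφ : IsCF G 2 φ) (hdeg : ∀ x, 3 ≤ (G.neighborSet x).ncard)
include hφ hdeg

lemma IsCF.eq_of_ncard_eq_one_of_isRareColor {c' : ℕ}
    (h : (edgeNbhd G u v ∩ φ ⁻¹' {c'}).ncard = 1) (hc : c < 2) (hu : IsRareColor G φ u c) :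
    c' = c :=
  (isRareColor_left_of_ncard_eq_one h).eq hφ.1 (hdeg u) (hφ.lt_of_ncard_eq_one h) hc hu

lemma IsCF.isRareColor_of_adj (hadj : G.Adj u v) (hc : c < 2) (hu : IsRareColor G φ u c) :
    IsRareColor G φ v c := by
  obtain ⟨c', h⟩ := hφ.2 hadj
  exact hφ.eq_of_ncard_eq_one_of_isRareColor hdeg h hc hu ▸ isRareColor_right_of_ncard_eq_one h

lemma IsCF.isRareColor_of_reachable (hc : c < 2) (hu : IsRareColor G φ u c)
    (huv : G.Reachable u v) : IsRareColor G φ v c := by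
  obtain ⟨p⟩ := huv
  induction p with
  | nil => exact hu
  | cons hadj _ ih => exact ih (hφ.isRareColor_of_adj hdeg hadj hc hu)

lemma IsCF.exists_isEfficientEdgeDominating [Nonempty V] (hG : G.Preconnected) :
    ∃ c, IsEfficientEdgeDominating G (φ ⁻¹' {c}) := by
  obtain ⟨x₀⟩ := ‹Nonempty V›
  obtain ⟨y₀, hy₀⟩ :=
    Set.nonempty_of_ncard_ne_zero (s := G.neighborSet x₀) (by have := hdeg x₀; omega)
  obtain ⟨c, h₀⟩ := hφ.2 hy₀
  have hc := hφ.lt_of_ncard_eq_one h₀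
  refine ⟨c, fun u v hadj => ?_⟩
  obtain ⟨c', h⟩ := hφ.2 hadj
  have hu :=
    hφ.isRareColor_of_reachable hdeg hc (isRareColor_left_of_ncard_eq_one h₀) (hG x₀ u)
  rwa [← hφ.eq_of_ncard_eq_one_of_isRareColor hdeg h hc hu]

end TwoColorings

section CompleteBipartite

variable {α β : Type*}

theorem not_isEfficientEdgeDominating_completeBipartiteGraph [Nontrivial α] [Nontrivial β]
    (F : Set (Sym2 (α ⊕ β))) : ¬ IsEfficientEdgeDominating (completeBipartiteGraph α β) F := by
  intro hF
  have hunique : ∀ {x y : α ⊕ β} {e f}, (completeBipartiteGraph α β).Adj x y →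
      e ∈ edgeNbhd _ x y ∩ F → f ∈ edgeNbhd _ x y ∩ F → e = f := fun hxy he hf => by
    obtain ⟨g, hg⟩ := Set.ncard_eq_one.1 (hF hxy)
    rw [hg] at he hf
    exact he.trans hf.symm
  obtain ⟨a₀⟩ : Nonempty α := inferInstance
  obtain ⟨b₀⟩ : Nonempty β := inferInstance
  obtain ⟨e, he, heF⟩ := Set.nonempty_of_ncard_ne_zero
    (s := edgeNbhd _ (inl a₀) (inr b₀) ∩ F) (by rw [hF (by simp)]; exact one_ne_zero)
  obtain ⟨a₁, b₁, rfl⟩ := exists_eq_of_mem_edgeSet_completeBipartiteGraph (mem_edgeNbhd.1 he).1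
  obtain ⟨a, ha⟩ := exists_ne a₁
  obtain ⟨b, hb⟩ := exists_ne b₁
  have hleft : ∀ b', s(inl a, inr b') ∉ F := fun b' hF' => by
    have := hunique (x := inl a) (y := inr b₁) (by simp)
      ⟨mem_edgeNbhd.2 ⟨by simp, by simp⟩, hF'⟩ ⟨mem_edgeNbhd.2 ⟨by simp, by simp⟩, heF⟩
    simp_all
  have hright : ∀ a', s(inl a', inr b) ∉ F := fun a' hF' => by
    have := hunique (x := inl a₁) (y := inr b) (by simp)
      ⟨mem_edgeNbhd.2 ⟨by simp, by simp⟩, hF'⟩ ⟨mem_edgeNbhd.2 ⟨by simp, by simp⟩, heF⟩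
    simp_all
  obtain ⟨f, hf, hfF⟩ := Set.nonempty_of_ncard_ne_zero
    (s := edgeNbhd _ (inl a) (inr b) ∩ F) (by rw [hF (by simp)]; exact one_ne_zero)
  obtain ⟨hfE, hfab⟩ := mem_edgeNbhd.1 hf
  obtain ⟨a', b', rfl⟩ := exists_eq_of_mem_edgeSet_completeBipartiteGraph hfE
  rcases hfab with h | h <;> simp at h <;> subst h
  · exact hleft b' hfF
  · exact hright a' hfF

variable [DecidableEq α] [DecidableEq β]

def starColoring (a₀ : α) (b₀ : β) (e : Sym2 (α ⊕ β)) : ℕ :=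
  if e = s(inl a₀, inr b₀) then 2 else if inr b₀ ∈ e then 1 else 0

lemma exists_ncard_starColoring_eq_one (a₀ a : α) (b₀ b : β) :
    ∃ c, (edgeNbhd (completeBipartiteGraph α β) (inl a) (inr b) ∩
      starColoring a₀ b₀ ⁻¹' {c}).ncard = 1 := by
  by_cases hab : a = a₀ ∨ b = b₀
  · refine ⟨2, Set.ncard_eq_one.2
      ⟨s(inl a₀, inr b₀), Set.eq_singleton_iff_unique_mem.2 ⟨?_, ?_⟩⟩⟩
    · refine ⟨mem_edgeNbhd.2 ⟨by simp, ?_⟩, by simp [starColoring]⟩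
      rcases hab with rfl | rfl <;> simp
    · rintro e ⟨-, he⟩
      simp only [starColoring, Set.mem_preimage, Set.mem_singleton_iff] at he
      split_ifs at he with h <;> first | exact h | omega
  · obtain ⟨ha, hb⟩ := not_or.1 hab
    refine ⟨1, Set.ncard_eq_one.2
      ⟨s(inl a, inr b₀), Set.eq_singleton_iff_unique_mem.2 ⟨?_, ?_⟩⟩⟩
    · exact ⟨mem_edgeNbhd.2 ⟨by simp, by simp⟩, by simp [starColoring, ha]⟩
    · rintro e ⟨he, hc⟩
      obtain ⟨heE, hae | hbe⟩ := mem_edgeNbhd.1 he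
      all_goals
        obtain ⟨a', b', rfl⟩ := exists_eq_of_mem_edgeSet_completeBipartiteGraph heE
        simp only [starColoring, Set.mem_preimage, Set.mem_singleton_iff] at hc
        split_ifs at hc with h₂ h₁ <;> simp_all

lemma isCF_starColoring (a₀ : α) (b₀ : β) :
    IsCF (completeBipartiteGraph α β) 3 (starColoring a₀ b₀) := by
  refine ⟨fun e _ => by unfold starColoring; split_ifs <;> omega, ?_⟩
  rintro (a | b) (a' | b') hadj
  · simp at hadj
  · exact exists_ncard_starColoring_eq_one a₀ a b₀ b'
  · rw [edgeNbhd_comm]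
    exact exists_ncard_starColoring_eq_one a₀ a' b₀ b
  · simp at hadj

end CompleteBipartite

theorem stmt_13 (n m : ℕ) (hm : 3 ≤ m) (hnm : m ≤ n) :
    cfIndex (completeBipartiteGraph (Fin n) (Fin m)) = 3 := by
  have : Nontrivial (Fin n) := Fin.nontrivial_iff_two_le.2 (by omega)
  have : Nontrivial (Fin m) := Fin.nontrivial_iff_two_le.2 (by omega)
  have h₃ : ∃ φ, IsCF (completeBipartiteGraph (Fin n) (Fin m)) 3 φ :=
    ⟨_, isCF_starColoring ⟨0, by omega⟩ ⟨0, by omega⟩⟩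
  refine le_antisymm (Nat.sInf_le h₃) (le_csInf ⟨3, h₃⟩ ?_)
  rintro k ⟨φ, hφ⟩
  by_contra! hk
  have hdeg : ∀ x, 3 ≤ ((completeBipartiteGraph (Fin n) (Fin m)).neighborSet x).ncard := by
    rintro (i | j) <;> simp [ncard_neighborSet_inl, ncard_neighborSet_inr] <;> omega
  obtain ⟨c, hc⟩ := (hφ.mono (by omega : k ≤ 2)).exists_isEfficientEdgeDominating hdeg
    completeBipartiteGraph_preconnected
  exact not_isEfficientEdgeDominating_completeBipartiteGraph _ hc
end
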